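/- Advantage approximation bound for the compatible linear critic: Let π be a policy of a finite discounted MDP, f : S×A → ℝ, w ∈ ℝ^d, and φ : S×A → ℝ^d with Σ_a π(a|s)·φ(s,a) = 0 for every s. Define g(s,a) = E_{a'∼π(·|s)}[f(s,a')] + ⟨w, φ(s,a)⟩ and ḡ(s,a) = g(s,a) − E_{a'∼π(·|s)}[g(s,a')]. Then E_{(s,a)∼d^π}[(ḡ(s,a) − A^π(s,a))²] ≤ 8·E_{(s,a)∼d^π}[(⟨w, φ(s,a)⟩ − f(s,a) + E_{a'∼π(·|s)}[f(s,a')])²] + 8·E_{(s,a)∼d^π}[(f(s,a) − Q^π(s,a))²]. -/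

import Mathlib

/-!
The centred critic `ḡ` reduces to the linear part `⟨w, φ⟩`, because compatible features have
`π`-mean zero. Hence, with `e := (⟨w, φ⟩ - f + E_π f) + (f - Q)`, the error `ḡ - A^π` is exactly
`e - E_π e`. Since `d^π(s, a) = d^π(s) π(a|s)`, the left-hand side is a `d^π`-average of
conditional variances, each bounded by the conditional second moment of `e`, and
`(x + y)² ≤ 2x² + 2y²` finishes; this even gives the constant 2.
-/

open Finset

structure FinMDP (S A : Type*) [Fintype S] [Fintype A] where
  P : S → A → S → ℝ
  P_nonneg : ∀ s a s', 0 ≤ P s a s'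
  P_sum : ∀ s a, ∑ s', P s a s' = 1
  r : S → A → ℝ
  r_nonneg : ∀ s a, 0 ≤ r s a
  r_le_one : ∀ s a, r s a ≤ 1
  disc : ℝ
  disc_pos : 0 < disc
  disc_lt_one : disc < 1
  init : S → ℝ
  init_nonneg : ∀ s, 0 ≤ init s
  init_sum : ∑ s, init s = 1

variable {S A : Type*} [Fintype S] [Fintype A] [Nonempty S] [Nonempty A]

/-- A policy assigns to each state a probability mass function over actions. -/
def IsPolicy (π : S → A → ℝ) : Prop :=
  (∀ s a, 0 ≤ π s a) ∧ ∀ s, ∑ a, π s a = 1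

/-- The Bellman operator `T^π`. -/
noncomputable def FinMDP.bellman (M : FinMDP S A) (π f : S → A → ℝ) (s : S) (a : A) : ℝ :=
  M.r s a + M.disc * ∑ s', M.P s a s' * ∑ a', π s' a' * f s' a'

/-- `Q` is the action-value function of `π`, i.e. satisfies the Bellman equation. -/
def FinMDP.IsQ (M : FinMDP S A) (π Q : S → A → ℝ) : Prop :=
  ∀ s a, Q s a = M.bellman π Q s a

/-- The state value `V^π(s)` induced by a `Q`-function. -/
noncomputable def vOf (π Q : S → A → ℝ) (s : S) : ℝ := ∑ a, π s a * Q s a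

/-- The scalar value `V^π = E_{s ∼ μ₀}[V^π(s)]`. -/
noncomputable def FinMDP.scalarV (M : FinMDP S A) (π Q : S → A → ℝ) : ℝ :=
  ∑ s, M.init s * vOf π Q s

/-- Distribution of the state at time `t` under policy `π`. -/
noncomputable def FinMDP.stateDist (M : FinMDP S A) (π : S → A → ℝ) : ℕ → S → ℝ
  | 0 => M.init
  | (t + 1) => fun s' => ∑ s, ∑ a, FinMDP.stateDist M π t s * π s a * M.P s a s'

/-- The discounted occupancy measure `d^π(s,a) = (1-γ) ∑_t γ^t Pr^π(s_t = s, a_t = a)`. -/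
noncomputable def FinMDP.occ (M : FinMDP S A) (π : S → A → ℝ) (s : S) (a : A) : ℝ :=
  (1 - M.disc) * ∑' t : ℕ, M.disc ^ t * M.stateDist π t s * π s a

theorem sum_mul_sq_sub_wmean_le {ι : Type*} [Fintype ι] {p : ι → ℝ} (hp : ∑ i, p i = 1)
    (x : ι → ℝ) : ∑ i, p i * (x i - ∑ j, p j * x j) ^ 2 ≤ ∑ i, p i * x i ^ 2 := by
  set m := ∑ j, p j * x j
  have hexpand : ∑ i, p i * (x i - m) ^ 2 = ∑ i, p i * x i ^ 2 - m ^ 2 := by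
    calc ∑ i, p i * (x i - m) ^ 2 = ∑ i, (p i * x i ^ 2 - 2 * m * (p i * x i) + m ^ 2 * p i) :=
          sum_congr rfl fun i _ => by ring
      _ = ∑ i, p i * x i ^ 2 - m ^ 2 := by
          rw [sum_add_distrib, sum_sub_distrib, ← mul_sum, ← mul_sum, hp]; ring
  linarith [sq_nonneg m]

theorem sum_mul_inner_eq_zero_of_sum_smul_eq_zero {ι E : Type*} [Fintype ι]
    [NormedAddCommGroup E] [InnerProductSpace ℝ E] {c : ι → ℝ} {v : ι → E}
    (h : ∑ i, c i • v i = 0) (w : E) : ∑ i, c i * inner ℝ w (v i) = 0 := by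
  simp_rw [← real_inner_smul_right, ← inner_sum, h, inner_zero_right]

section

-- Rebinding `S A` keeps the outer `[Nonempty S] [Nonempty A]` out of these lemmas.
variable {S A : Type*} [Fintype S] [Fintype A]

namespace FinMDP

variable (M : FinMDP S A) (π : S → A → ℝ)

noncomputable def stateOcc (s : S) : ℝ :=
  (1 - M.disc) * ∑' t : ℕ, M.disc ^ t * M.stateDist π t s

theorem occ_eq_stateOcc_mul (s : S) (a : A) : M.occ π s a = M.stateOcc π s * π s a := by
  rw [occ, stateOcc, mul_assoc, tsum_mul_right]

variable {π}

theorem stateDist_nonneg (hπ : ∀ s a, 0 ≤ π s a) (t : ℕ) (s : S) : 0 ≤ M.stateDist π t s := by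
  induction t generalizing s with
  | zero => exact M.init_nonneg s
  | succ t ih =>
    exact sum_nonneg fun s' _ => sum_nonneg fun a _ =>
      mul_nonneg (mul_nonneg (ih s') (hπ s' a)) (M.P_nonneg s' a s)

theorem stateOcc_nonneg (hπ : ∀ s a, 0 ≤ π s a) (s : S) : 0 ≤ M.stateOcc π s :=
  mul_nonneg (sub_nonneg.2 M.disc_lt_one.le) <| tsum_nonneg fun t =>
    mul_nonneg (pow_nonneg M.disc_pos.le t) (M.stateDist_nonneg hπ t s)

theorem occ_nonneg (hπ : ∀ s a, 0 ≤ π s a) (s : S) (a : A) : 0 ≤ M.occ π s a := by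
  rw [occ_eq_stateOcc_mul]
  exact mul_nonneg (M.stateOcc_nonneg hπ s) (hπ s a)

theorem sum_occ_mul_sq_nonneg (hπ : ∀ s a, 0 ≤ π s a) (x : S → A → ℝ) :
    0 ≤ ∑ s, ∑ a, M.occ π s a * x s a ^ 2 :=
  sum_nonneg fun s _ => sum_nonneg fun a _ => mul_nonneg (M.occ_nonneg hπ s a) (sq_nonneg _)

theorem sum_occ_mul_sq_sub_mean_le (hπ : IsPolicy π) (e : S → A → ℝ) :
    ∑ s, ∑ a, M.occ π s a * (e s a - ∑ a', π s a' * e s a') ^ 2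
      ≤ ∑ s, ∑ a, M.occ π s a * e s a ^ 2 := by
  refine sum_le_sum fun s _ => ?_
  simp only [occ_eq_stateOcc_mul, mul_assoc, ← mul_sum]
  exact mul_le_mul_of_nonneg_left (sum_mul_sq_sub_wmean_le (hπ.2 s) (e s))
    (M.stateOcc_nonneg hπ.1 s)

theorem sum_occ_mul_add_sq_le (hπ : ∀ s a, 0 ≤ π s a) (x y : S → A → ℝ) :
    ∑ s, ∑ a, M.occ π s a * (x s a + y s a) ^ 2
      ≤ 2 * ∑ s, ∑ a, M.occ π s a * x s a ^ 2 + 2 * ∑ s, ∑ a, M.occ π s a * y s a ^ 2 := by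
  simp only [mul_sum, ← sum_add_distrib]
  gcongr with s _ a
  nlinarith [M.occ_nonneg hπ s a, add_sq_le (a := x s a) (b := y s a)]

end FinMDP

end

theorem stmt19_general {d : ℕ} (M : FinMDP S A) (π Q : S → A → ℝ)
    (hπ : IsPolicy π)
    (f : S → A → ℝ) (w : EuclideanSpace ℝ (Fin d)) (φ : S → A → EuclideanSpace ℝ (Fin d))
    (hφ : ∀ s, ∑ a, π s a • φ s a = 0)
    (g gbar : S → A → ℝ)
    (hg : ∀ s a, g s a = (∑ a', π s a' * f s a') + (inner ℝ w (φ s a) : ℝ))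
    (hgbar : ∀ s a, gbar s a = g s a - ∑ a', π s a' * g s a') :
    ∑ s, ∑ a, M.occ π s a * (gbar s a - (Q s a - vOf π Q s)) ^ 2
      ≤ 8 * (∑ s, ∑ a, M.occ π s a *
            ((inner ℝ w (φ s a) : ℝ) - f s a + ∑ a', π s a' * f s a') ^ 2)
        + 8 * ∑ s, ∑ a, M.occ π s a * (f s a - Q s a) ^ 2 := by
  have hmean_inner : ∀ s, ∑ a, π s a * inner ℝ w (φ s a) = 0 := fun s =>
    sum_mul_inner_eq_zero_of_sum_smul_eq_zero (hφ s) w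
  have hgbar_eq : ∀ s a, gbar s a = inner ℝ w (φ s a) := by
    intro s a
    simp only [hgbar, hg, mul_add, sum_add_distrib, ← sum_mul, hπ.2 s, hmean_inner s]
    ring
  set e : S → A → ℝ := fun s a =>
    (inner ℝ w (φ s a) - f s a + ∑ a', π s a' * f s a') + (f s a - Q s a) with he
  have herr : ∀ s a, gbar s a - (Q s a - vOf π Q s) = e s a - ∑ a', π s a' * e s a' := by
    intro s a
    simp only [he, hgbar_eq, vOf, mul_add, mul_sub, sum_add_distrib, sum_sub_distrib, ← sum_mul,
      hπ.2 s, hmean_inner s]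
    ring
  calc ∑ s, ∑ a, M.occ π s a * (gbar s a - (Q s a - vOf π Q s)) ^ 2
      = ∑ s, ∑ a, M.occ π s a * (e s a - ∑ a', π s a' * e s a') ^ 2 := by simp only [herr]
    _ ≤ ∑ s, ∑ a, M.occ π s a * e s a ^ 2 := M.sum_occ_mul_sq_sub_mean_le hπ e
    _ ≤ 2 * (∑ s, ∑ a, M.occ π s a *
            ((inner ℝ w (φ s a) : ℝ) - f s a + ∑ a', π s a' * f s a') ^ 2)
        + 2 * ∑ s, ∑ a, M.occ π s a * (f s a - Q s a) ^ 2 := M.sum_occ_mul_add_sq_le hπ.1 _ _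
    _ ≤ _ := by
      linarith [M.sum_occ_mul_sq_nonneg hπ.1 fun s a => f s a - Q s a,
        M.sum_occ_mul_sq_nonneg hπ.1 fun s a =>
          (inner ℝ w (φ s a) : ℝ) - f s a + ∑ a', π s a' * f s a']

/-- Advantage approximation bound for the compatible linear critic. -/
theorem stmt19 {d : ℕ} (M : FinMDP S A) (π Q : S → A → ℝ)
    (hπ : IsPolicy π) (hQ : M.IsQ π Q)
    (f : S → A → ℝ) (w : EuclideanSpace ℝ (Fin d)) (φ : S → A → EuclideanSpace ℝ (Fin d))
    (hφ : ∀ s, ∑ a, π s a • φ s a = 0)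
    (g gbar : S → A → ℝ)
    (hg : ∀ s a, g s a = (∑ a', π s a' * f s a') + (inner ℝ w (φ s a) : ℝ))
    (hgbar : ∀ s a, gbar s a = g s a - ∑ a', π s a' * g s a') :
    ∑ s, ∑ a, M.occ π s a * (gbar s a - (Q s a - vOf π Q s)) ^ 2
      ≤ 8 * (∑ s, ∑ a, M.occ π s a *
            ((inner ℝ w (φ s a) : ℝ) - f s a + ∑ a', π s a' * f s a') ^ 2)
        + 8 * ∑ s, ∑ a, M.occ π s a * (f s a - Q s a) ^ 2 :=
  stmt19_general M π Q hπ f w φ hφ g gbar hg hgbar
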